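/- arXiv:2210.11014 — 3 statements merged into one kernel-verified Lean document; each statement's English description precedes it below -/
import Mathlib

section
/- Let 𝒳 be a class of objects in an abelian category with enough projectives that contains all projective objects, is closed under finite coproducts, and is closed under countable coproducts. If 𝒳 is closed under extensions and epikernels (kernels of epimorphisms between objects of 𝒳), then 𝒳 is closed under direct summands. -/
/-!
STATEMENT 4 (Eilenberg swindle): Let 𝒳 be a class of objects in an abelian
category with enough projectives, containing all projective objects, closed
under isomorphisms, finite coproducts and countable coproducts.  If 𝒳 is
closed under extensions and epikernels, then 𝒳 is closed under direct
summands.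
-/

open CategoryTheory CategoryTheory.Limits

universe v u

private noncomputable def sigmaBiprodIso {C : Type u} [Category.{v} C] [Abelian C]
    [HasCountableCoproducts C] (f g : ℕ → C) :
    (∐ fun n => (f n) ⊞ (g n)) ≅ (∐ f) ⊞ (∐ g) where
  hom := Sigma.desc fun n => biprod.map (Sigma.ι f n) (Sigma.ι g n)
  inv := biprod.desc (Sigma.desc fun n => biprod.inl ≫ Sigma.ι (fun n => (f n) ⊞ (g n)) n)
    (Sigma.desc fun n => biprod.inr ≫ Sigma.ι (fun n => (f n) ⊞ (g n)) n)
  hom_inv_id := by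
    ext n
    all_goals
      simp only [Category.assoc, biprod.inr_desc_assoc, biprod.inl_desc_assoc,
        colimit.ι_desc_assoc, colimit.ι_desc]
      simp
  inv_hom_id := by
    ext n
    all_goals
      simp only [Category.assoc, biprod.inr_desc_assoc, biprod.inl_desc_assoc,
        colimit.ι_desc_assoc, colimit.ι_desc]
      simp

private noncomputable def absorbIso {C : Type u} [Category.{v} C] [Abelian C]
    [HasCountableCoproducts C] (A : C) :
    A ⊞ (∐ fun _ : ℕ => A) ≅ (∐ fun _ : ℕ => A) where
  hom := biprod.desc (Sigma.ι (fun _ : ℕ => A) 0)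
    (Sigma.desc fun n => Sigma.ι (fun _ : ℕ => A) (n + 1))
  inv := Sigma.desc fun n => match n with
    | 0 => biprod.inl
    | n + 1 => Sigma.ι (fun _ : ℕ => A) n ≫ biprod.inr
  hom_inv_id := by
    ext n
    all_goals
      simp only [Category.assoc, biprod.inr_desc_assoc, biprod.inl_desc_assoc,
        colimit.ι_desc_assoc, colimit.ι_desc]
      simp
  inv_hom_id := by
    ext n
    rcases n with _ | n <;>
      (simp only [Category.assoc, biprod.inr_desc_assoc, biprod.inl_desc_assoc,
        colimit.ι_desc_assoc, colimit.ι_desc]; simp)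

theorem stmt_4 {C : Type u} [Category.{v} C] [Abelian C] [EnoughProjectives C]
    [HasCountableCoproducts C]
    (𝒳 : Set C)
    (hiso : ∀ {A B : C}, (A ≅ B) → A ∈ 𝒳 → B ∈ 𝒳)
    (hproj : ∀ P : C, Projective P → P ∈ 𝒳)
    (hbin : ∀ A B : C, A ∈ 𝒳 → B ∈ 𝒳 → (A ⊞ B) ∈ 𝒳)
    (hcoprod : ∀ f : ℕ → C, (∀ n, f n ∈ 𝒳) → (∐ f) ∈ 𝒳)
    (hext : ∀ S : ShortComplex C, S.ShortExact → S.X₁ ∈ 𝒳 → S.X₃ ∈ 𝒳 → S.X₂ ∈ 𝒳)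
    (hepiker : ∀ S : ShortComplex C, S.ShortExact → S.X₂ ∈ 𝒳 → S.X₃ ∈ 𝒳 → S.X₁ ∈ 𝒳) :
    ∀ (X : C), X ∈ 𝒳 → ∀ (M N : C), (X ≅ M ⊞ N) → M ∈ 𝒳 := by
  intro X hX M N e
  set Y : C := ∐ (fun _ : ℕ => X) with hYdef
  have hY : Y ∈ 𝒳 := hcoprod _ (fun _ => hX)
  -- the swindle isomorphism
  have i1 : Y ≅ ∐ (fun _ : ℕ => M ⊞ N) := Sigma.mapIso (fun _ => e)
  have i2 : (∐ fun _ : ℕ => M ⊞ N) ≅ (∐ fun _ : ℕ => M) ⊞ (∐ fun _ : ℕ => N) :=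
    sigmaBiprodIso _ _
  have main : M ⊞ Y ≅ Y :=
    biprod.mapIso (Iso.refl M) (i1 ≪≫ i2) ≪≫
      (biprod.associator M (∐ fun _ : ℕ => M) (∐ fun _ : ℕ => N)).symm ≪≫
      biprod.mapIso (absorbIso M) (Iso.refl _) ≪≫ i2.symm ≪≫ i1.symm
  have hMY : (M ⊞ Y) ∈ 𝒳 := hiso main.symm hY
  exact hepiker (ShortComplex.mk (biprod.inl : M ⟶ M ⊞ Y) (biprod.snd : M ⊞ Y ⟶ Y) (by simp))
    (ShortComplex.Splitting.ofHasBinaryBiproduct M Y).shortExact hMY hY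
end

section
/- Let (𝒳, 𝒴) be a pair of classes in an abelian category such that: Ext^{≥1}(𝒳, 𝒴) = 0, 𝒴 is closed under extensions and direct summands, and 𝒳 ∩ 𝒴 is a relative generator in the class 𝒢 of (𝒳,𝒴)-Gorenstein injective objects (every G ∈ 𝒢 fits in 0 → G' → W → G → 0 with W ∈ 𝒳 ∩ 𝒴, G' ∈ 𝒢), and 𝒢 is closed under extensions and direct summands. Then for any short exact sequence 0 → A → B → C → 0 with Ext^1(W, A) = 0 for all W ∈ 𝒳 ∩ 𝒴 and B, C ∈ 𝒢, one has A ∈ 𝒢. -/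
/-!
Choose `0 → G' → W → C → 0` with `W ∈ 𝒳 ∩ 𝒴` and `G' ∈ 𝒢`, and form the pullback `N` of
`W ↠ C` and `B ↠ C`. Read along `B`, the pullback square makes `N` an extension of `B` by `G'`,
so `N ∈ 𝒢`. Read along `W`, it makes `N` an extension of `W` by `A`, which splits because
`Ext¹(W, A) = 0`; hence `A` is a direct summand of `N`.
-/

open CategoryTheory CategoryTheory.Limits CategoryTheory.Abelian

universe w v u

namespace CategoryTheory.ShortComplex

variable {C : Type u} [Category.{v} C] [Abelian C]

noncomputable def pullback (S : ShortComplex C) {P Y : C} {fst : P ⟶ S.X₂} {snd : P ⟶ Y}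
    {q : Y ⟶ S.X₃} (h : IsPullback fst snd S.g q) : ShortComplex C :=
  ShortComplex.mk (h.lift S.f 0 (by simp)) snd (by simp)

lemma ShortExact.pullback {S : ShortComplex C} (hS : S.ShortExact) {P Y : C}
    {fst : P ⟶ S.X₂} {snd : P ⟶ Y} {q : Y ⟶ S.X₃} (h : IsPullback fst snd S.g q) :
    (S.pullback h).ShortExact := by
  have := hS.mono_f
  have := hS.epi_g
  have hf : Mono (S.pullback h).f := by
    dsimp only [ShortComplex.pullback]
    exact mono_of_mono_fac (h.lift_fst S.f 0 (by simp))
  have hg : Epi (S.pullback h).g := Abelian.epi_snd_of_isLimit S.g q h.isLimit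
  refine ShortExact.mk' (exact_of_f_is_kernel _ (KernelFork.IsLimit.ofι' _ _ ?_)) hf hg
  intro Z (k : Z ⟶ P) (hk : k ≫ snd = 0)
  have hkS : (k ≫ fst) ≫ S.g = 0 := by
    rw [Category.assoc, h.w, ← Category.assoc, hk, zero_comp]
  refine ⟨hS.exact.lift (k ≫ fst) hkS, h.hom_ext ?_ ?_⟩
  · simp [ShortComplex.pullback]
  · simpa [ShortComplex.pullback] using hk.symm

/-- The identity of `S.X₁` lifts along `S.f` in the long exact `Ext(-, S.X₁)` sequence,
since its image in `Ext¹(S.X₃, S.X₁)` vanishes. -/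
lemma ShortExact.exists_retraction_of_subsingleton_ext [HasExt.{w} C] {S : ShortComplex C}
    (hS : S.ShortExact) (hExt : Subsingleton (Ext.{w} S.X₃ S.X₁ 1)) :
    ∃ r : S.X₂ ⟶ S.X₁, S.f ≫ r = 𝟙 S.X₁ := by
  obtain ⟨r, hr⟩ := Ext.contravariant_sequence_exact₁ hS (Y := S.X₁) (Ext.mk₀ (𝟙 S.X₁))
    (zero_add 1) (Subsingleton.elim _ _)
  refine ⟨Ext.homEquiv₀ r, (Ext.mk₀_bijective _ _).injective ?_⟩
  rw [← Ext.mk₀_comp_mk₀, Ext.mk₀_homEquiv₀_apply, hr]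

end CategoryTheory.ShortComplex

theorem stmt_15_general {C : Type u} [Category.{v} C] [Abelian C] [HasExt.{w} C]
    (𝒳 𝒴 𝒢 : Set C)
    (hgen : ∀ G ∈ 𝒢, ∃ (G' W : C) (_ : W ∈ 𝒳 ∩ 𝒴) (_ : G' ∈ 𝒢)
      (f : G' ⟶ W) (g : W ⟶ G) (w : f ≫ g = 0), (ShortComplex.mk f g w).ShortExact)
    (hGext : ∀ S : ShortComplex C, S.ShortExact → S.X₁ ∈ 𝒢 → S.X₃ ∈ 𝒢 → S.X₂ ∈ 𝒢)
    (hGsumm : ∀ G ∈ 𝒢, ∀ (M : C) (s : M ⟶ G) (r : G ⟶ M), s ≫ r = 𝟙 M → M ∈ 𝒢)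
    (S : ShortComplex C) (hS : S.ShortExact)
    (hA : ∀ W ∈ 𝒳 ∩ 𝒴, Subsingleton (Ext W S.X₁ 1))
    (hB : S.X₂ ∈ 𝒢) (hC : S.X₃ ∈ 𝒢) : S.X₁ ∈ 𝒢 := by
  obtain ⟨G', W, hW, hG', f, g, w, hGW⟩ := hgen S.X₃ hC
  have hsq := IsPullback.of_hasPullback g S.g
  have hN : pullback g S.g ∈ 𝒢 := hGext _ (hGW.pullback hsq) hG' hB
  obtain ⟨r, hr⟩ := (hS.pullback hsq.flip).exists_retraction_of_subsingleton_ext (hA W hW)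
  exact hGsumm _ hN S.X₁ _ r hr

theorem stmt_15 {C : Type u} [Category.{v} C] [Abelian C] [HasExt.{w} C]
    (𝒳 𝒴 𝒢 : Set C)
    (horth : ∀ X ∈ 𝒳, ∀ Y ∈ 𝒴, ∀ i : ℕ, 1 ≤ i → Subsingleton (Ext X Y i))
    (hYext : ∀ S : ShortComplex C, S.ShortExact → S.X₁ ∈ 𝒴 → S.X₃ ∈ 𝒴 → S.X₂ ∈ 𝒴)
    (hYsumm : ∀ Y ∈ 𝒴, ∀ (M : C) (s : M ⟶ Y) (r : Y ⟶ M), s ≫ r = 𝟙 M → M ∈ 𝒴)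
    (hgen : ∀ G ∈ 𝒢, ∃ (G' W : C) (_ : W ∈ 𝒳 ∩ 𝒴) (_ : G' ∈ 𝒢)
      (f : G' ⟶ W) (g : W ⟶ G) (w : f ≫ g = 0), (ShortComplex.mk f g w).ShortExact)
    (hGext : ∀ S : ShortComplex C, S.ShortExact → S.X₁ ∈ 𝒢 → S.X₃ ∈ 𝒢 → S.X₂ ∈ 𝒢)
    (hGsumm : ∀ G ∈ 𝒢, ∀ (M : C) (s : M ⟶ G) (r : G ⟶ M), s ≫ r = 𝟙 M → M ∈ 𝒢)
    (S : ShortComplex C) (hS : S.ShortExact)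
    (hA : ∀ W ∈ 𝒳 ∩ 𝒴, Subsingleton (Ext W S.X₁ 1))
    (hB : S.X₂ ∈ 𝒢) (hC : S.X₃ ∈ 𝒢) : S.X₁ ∈ 𝒢 :=
  stmt_15_general 𝒳 𝒴 𝒢 hgen hGext hGsumm S hS hA hB hC
end

section
/- Let (𝒬, ℛ') and (𝒬', ℛ) be complete hereditary cotorsion pairs in an abelian category with 𝒬' ⊆ 𝒬 and ℛ' ⊆ ℛ and 𝒬 ∩ ℛ' = 𝒬' ∩ ℛ. Then the two descriptions of the class 𝒲 coincide: an object W admits a short exact sequence 0 → R → Q → W → 0 with R ∈ ℛ', Q ∈ 𝒬' if and only if it admits a short exact sequence 0 → W → R'' → Q'' → 0 with R'' ∈ ℛ' and Q'' ∈ 𝒬'. -/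
/-!
STATEMENT 17: Let (𝒬, ℛ') and (𝒬', ℛ) be complete hereditary cotorsion pairs
in an abelian category with 𝒬' ⊆ 𝒬, ℛ' ⊆ ℛ and 𝒬 ∩ ℛ' = 𝒬' ∩ ℛ.  Then the
two descriptions of Gillespie's trivial class coincide: an object W admits a
short exact sequence 0 → R → Q → W → 0 with R ∈ ℛ', Q ∈ 𝒬' if and only if it
admits a short exact sequence 0 → W → R'' → Q'' → 0 with R'' ∈ ℛ', Q'' ∈ 𝒬'.
-/

open CategoryTheory CategoryTheory.Limits CategoryTheory.Abelian

universe w v u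

variable {C : Type u} [Category.{v} C] [Abelian C] [HasExt.{w} C]

/-- `(𝒜, ℬ)` is a cotorsion pair: each class is the `Ext¹`-orthogonal
complement of the other. -/
def IsCotorsionPair (𝒜 ℬ : Set C) : Prop :=
  (∀ M : C, M ∈ 𝒜 ↔ ∀ B ∈ ℬ, Subsingleton (Ext M B 1)) ∧
    (∀ M : C, M ∈ ℬ ↔ ∀ A ∈ 𝒜, Subsingleton (Ext A M 1))

/-- A cotorsion pair `(𝒜, ℬ)` is complete: every object has a special
`𝒜`-precover and a special `ℬ`-preenvelope. -/
def IsCompleteCotorsionPair (𝒜 ℬ : Set C) : Prop :=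
  (∀ M : C, ∃ (B A : C) (_ : B ∈ ℬ) (_ : A ∈ 𝒜) (f : B ⟶ A) (g : A ⟶ M)
    (w : f ≫ g = 0), (ShortComplex.mk f g w).ShortExact) ∧
  (∀ M : C, ∃ (B A : C) (_ : B ∈ ℬ) (_ : A ∈ 𝒜) (f : M ⟶ B) (g : B ⟶ A)
    (w : f ≫ g = 0), (ShortComplex.mk f g w).ShortExact)

/-- A cotorsion pair `(𝒜, ℬ)` is hereditary: `Ext^i(𝒜, ℬ) = 0` for `i ≥ 1`. -/
def IsHereditary (𝒜 ℬ : Set C) : Prop :=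
  ∀ A ∈ 𝒜, ∀ B ∈ ℬ, ∀ i : ℕ, 1 ≤ i → Subsingleton (Ext A B i)

/-!
Given `0 → R → Q → W → 0` with `R ∈ ℛ'`, `Q ∈ 𝒬'`, take a special `ℛ`-preenvelope
`0 → Q → R₁ → Q₁ → 0`. Then `R₁ ∈ 𝒬' ∩ ℛ` because `𝒬'` is closed under extensions, so `R₁ ∈ ℛ'`
by the core condition. Pushing out along `Q → W` gives `0 → W → P → Q₁ → 0` and
`0 → R → R₁ → P → 0`; heredity of `(𝒬, ℛ')` puts `P` in `ℛ'`. The converse is dual: pull a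
special `𝒬`-precover of `R''` back along `R'' → Q''`.
-/

namespace CategoryTheory.ShortComplex.ShortExact

variable {S : ShortComplex C} (hS : S.ShortExact)
include hS

lemma subsingleton_ext_to_X₂ (X : C) {n : ℕ} (h₁ : Subsingleton (Ext X S.X₁ n))
    (h₃ : Subsingleton (Ext X S.X₃ n)) : Subsingleton (Ext X S.X₂ n) :=
  subsingleton_of_forall_eq 0 fun x => by
    obtain ⟨x₁, rfl⟩ := Ext.covariant_sequence_exact₂ X hS x (Subsingleton.elim _ 0)
    rw [Subsingleton.elim x₁ 0, Ext.zero_comp]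

lemma subsingleton_ext_from_X₂ (Y : C) {n : ℕ} (h₁ : Subsingleton (Ext S.X₁ Y n))
    (h₃ : Subsingleton (Ext S.X₃ Y n)) : Subsingleton (Ext S.X₂ Y n) :=
  subsingleton_of_forall_eq 0 fun x => by
    obtain ⟨x₃, rfl⟩ := Ext.contravariant_sequence_exact₂ hS Y x (Subsingleton.elim _ 0)
    rw [Subsingleton.elim x₃ 0, Ext.comp_zero]

lemma subsingleton_ext_to_X₃ (X : C) {n₀ n₁ : ℕ} (hn : n₀ + 1 = n₁)
    (h₂ : Subsingleton (Ext X S.X₂ n₀)) (h₁ : Subsingleton (Ext X S.X₁ n₁)) :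
    Subsingleton (Ext X S.X₃ n₀) :=
  subsingleton_of_forall_eq 0 fun x => by
    obtain ⟨x₂, rfl⟩ := Ext.covariant_sequence_exact₃ X hS x hn (Subsingleton.elim _ 0)
    rw [Subsingleton.elim x₂ 0, Ext.zero_comp]

lemma subsingleton_ext_from_X₁ (Y : C) {n₀ n₁ : ℕ} (hn : 1 + n₀ = n₁)
    (h₂ : Subsingleton (Ext S.X₂ Y n₀)) (h₃ : Subsingleton (Ext S.X₃ Y n₁)) :
    Subsingleton (Ext S.X₁ Y n₀) :=
  subsingleton_of_forall_eq 0 fun x => by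
    obtain ⟨x₂, rfl⟩ := Ext.contravariant_sequence_exact₁ hS Y x hn (Subsingleton.elim _ 0)
    rw [Subsingleton.elim x₂ 0, Ext.comp_zero]

end CategoryTheory.ShortComplex.ShortExact

namespace IsCotorsionPair

variable {𝒜 ℬ : Set C} (h : IsCotorsionPair 𝒜 ℬ) {S : ShortComplex C} (hS : S.ShortExact)
include h hS

lemma mem_left_X₂ (h₁ : S.X₁ ∈ 𝒜) (h₃ : S.X₃ ∈ 𝒜) : S.X₂ ∈ 𝒜 :=
  (h.1 _).2 fun B hB => hS.subsingleton_ext_from_X₂ B ((h.1 _).1 h₁ B hB) ((h.1 _).1 h₃ B hB)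

lemma mem_right_X₂ (h₁ : S.X₁ ∈ ℬ) (h₃ : S.X₃ ∈ ℬ) : S.X₂ ∈ ℬ :=
  (h.2 _).2 fun A hA => hS.subsingleton_ext_to_X₂ A ((h.2 _).1 h₁ A hA) ((h.2 _).1 h₃ A hA)

lemma mem_left_X₁ (hh : IsHereditary 𝒜 ℬ) (h₂ : S.X₂ ∈ 𝒜) (h₃ : S.X₃ ∈ 𝒜) : S.X₁ ∈ 𝒜 :=
  (h.1 _).2 fun B hB =>
    hS.subsingleton_ext_from_X₁ B rfl ((h.1 _).1 h₂ B hB) (hh _ h₃ B hB 2 one_le_two)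

lemma mem_right_X₃ (hh : IsHereditary 𝒜 ℬ) (h₁ : S.X₁ ∈ ℬ) (h₂ : S.X₂ ∈ ℬ) : S.X₃ ∈ ℬ :=
  (h.2 _).2 fun A hA =>
    hS.subsingleton_ext_to_X₃ A rfl ((h.2 _).1 h₂ A hA) (hh A hA _ h₁ 2 one_le_two)

end IsCotorsionPair

omit [HasExt.{w} C] in
lemma exists_shortExact_pair_of_pushout {R Q W X₂ X₃ : C} {f : R ⟶ Q} {g : Q ⟶ W}
    {w : f ≫ g = 0} (hS : (ShortComplex.mk f g w).ShortExact)
    {i : Q ⟶ X₂} {q : X₂ ⟶ X₃} {w' : i ≫ q = 0} (hT : (ShortComplex.mk i q w').ShortExact) :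
    ∃ (P : C) (u : X₂ ⟶ P) (wu : (f ≫ i) ≫ u = 0) (v : W ⟶ P) (b : P ⟶ X₃) (wv : v ≫ b = 0),
      (ShortComplex.mk (f ≫ i) u wu).ShortExact ∧ (ShortComplex.mk v b wv).ShortExact := by
  have := hS.mono_f
  have := hS.epi_g
  have := hT.mono_f
  have := hT.epi_g
  have wb : g ≫ (0 : W ⟶ X₃) = i ≫ q := by rw [w', comp_zero]
  refine ⟨pushout g i, pushout.inr g i, ?_, pushout.inl g i, pushout.desc 0 q wb,
    pushout.inl_desc _ _ _, ?_, ?_⟩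
  · rw [Category.assoc, ← pushout.condition, reassoc_of% w, zero_comp]
  · refine .mk' (ShortComplex.exact_of_g_is_cokernel _ (CokernelCofork.IsColimit.ofπ' _ _ ?_))
      inferInstance inferInstance
    intro A k hk
    have hik : f ≫ i ≫ k = 0 := by simpa using hk
    exact ⟨pushout.desc (hS.exact.desc (i ≫ k) hik) k (hS.exact.g_desc _ _),
      pushout.inr_desc _ _ _⟩
  · have : Epi (pushout.desc (0 : W ⟶ X₃) q wb) :=
      epi_of_epi_fac (pushout.inr_desc (0 : W ⟶ X₃) q wb)
    refine .mk' (ShortComplex.exact_of_g_is_cokernel _ (CokernelCofork.IsColimit.ofπ' _ _ ?_))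
      inferInstance inferInstance
    intro A k hk
    have hik : i ≫ pushout.inr g i ≫ k = 0 := by
      rw [← Category.assoc, ← pushout.condition, Category.assoc, hk, comp_zero]
    refine ⟨hT.exact.desc (pushout.inr g i ≫ k) hik, pushout.hom_ext ?_ ?_⟩
    · rw [pushout.inl_desc_assoc, zero_comp]
      exact hk.symm
    · rw [pushout.inr_desc_assoc]
      exact hT.exact.g_desc _ _

omit [HasExt.{w} C] in
lemma exists_shortExact_pair_of_pullback {W R Q X₁ X₂ : C} {f : W ⟶ R} {g : R ⟶ Q}
    {w : f ≫ g = 0} (hS : (ShortComplex.mk f g w).ShortExact)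
    {i : X₁ ⟶ X₂} {p : X₂ ⟶ R} {w' : i ≫ p = 0} (hT : (ShortComplex.mk i p w').ShortExact) :
    ∃ (P : C) (a : X₁ ⟶ P) (b : P ⟶ W) (wa : a ≫ b = 0) (c : P ⟶ X₂) (wc : c ≫ p ≫ g = 0),
      (ShortComplex.mk a b wa).ShortExact ∧ (ShortComplex.mk c (p ≫ g) wc).ShortExact := by
  have := hS.mono_f
  have := hS.epi_g
  have := hT.mono_f
  have := hT.epi_g
  have wa : i ≫ p = (0 : X₁ ⟶ W) ≫ f := by rw [w', zero_comp]
  refine ⟨pullback p f, pullback.lift i 0 wa, pullback.snd p f, pullback.lift_snd _ _ _,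
    pullback.fst p f, ?_, ?_, ?_⟩
  · rw [pullback.condition_assoc, w, comp_zero]
  · have : Mono (pullback.lift i 0 wa) := mono_of_mono_fac (pullback.lift_fst i 0 wa)
    refine .mk' (ShortComplex.exact_of_f_is_kernel _ (KernelFork.IsLimit.ofι' _ _ ?_))
      inferInstance inferInstance
    intro A k hk
    have hkp : (k ≫ pullback.fst p f) ≫ p = 0 := by
      rw [Category.assoc, pullback.condition, reassoc_of% hk, zero_comp]
    refine ⟨hT.exact.lift (k ≫ pullback.fst p f) hkp, pullback.hom_ext ?_ ?_⟩
    · rw [Category.assoc, pullback.lift_fst]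
      exact hT.exact.lift_f _ _
    · rw [Category.assoc, pullback.lift_snd, comp_zero]
      exact hk.symm
  · refine .mk' (ShortComplex.exact_of_f_is_kernel _ (KernelFork.IsLimit.ofι' _ _ ?_))
      inferInstance inferInstance
    intro A k hk
    have hkg : (k ≫ p) ≫ g = 0 := by simpa using hk
    exact ⟨pullback.lift k (hS.exact.lift (k ≫ p) hkg) (hS.exact.lift_f _ _).symm,
      pullback.lift_fst _ _ _⟩

section GillespieTrivialClass

variable {𝒬 ℛ' 𝒬' ℛ : Set C} {W : C}

lemma exists_coresolution_of_exists_resolution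
    (h₁ : IsCotorsionPair 𝒬 ℛ') (h₁h : IsHereditary 𝒬 ℛ')
    (h₂ : IsCotorsionPair 𝒬' ℛ) (h₂c : IsCompleteCotorsionPair 𝒬' ℛ) (hcore : 𝒬' ∩ ℛ ⊆ ℛ')
    (hW : ∃ (R Q : C) (_ : R ∈ ℛ') (_ : Q ∈ 𝒬') (f : R ⟶ Q) (g : Q ⟶ W)
      (w : f ≫ g = 0), (ShortComplex.mk f g w).ShortExact) :
    ∃ (R'' Q'' : C) (_ : R'' ∈ ℛ') (_ : Q'' ∈ 𝒬') (f : W ⟶ R'') (g : R'' ⟶ Q'')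
      (w : f ≫ g = 0), (ShortComplex.mk f g w).ShortExact := by
  obtain ⟨R, Q, hR, hQ, f, g, w, hS⟩ := hW
  obtain ⟨R₁, Q₁, hR₁, hQ₁, i, q, w', hT⟩ := h₂c.2 Q
  have hR₁' : R₁ ∈ ℛ' := hcore ⟨h₂.mem_left_X₂ hT hQ hQ₁, hR₁⟩
  obtain ⟨P, u, wu, v, b, wv, hRP, hWP⟩ := exists_shortExact_pair_of_pushout hS hT
  exact ⟨P, Q₁, h₁.mem_right_X₃ hRP h₁h hR hR₁', hQ₁, v, b, wv, hWP⟩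

lemma exists_resolution_of_exists_coresolution
    (h₁ : IsCotorsionPair 𝒬 ℛ') (h₁c : IsCompleteCotorsionPair 𝒬 ℛ')
    (h₂ : IsCotorsionPair 𝒬' ℛ) (h₂h : IsHereditary 𝒬' ℛ) (hcore : 𝒬 ∩ ℛ' ⊆ 𝒬')
    (hW : ∃ (R'' Q'' : C) (_ : R'' ∈ ℛ') (_ : Q'' ∈ 𝒬') (f : W ⟶ R'') (g : R'' ⟶ Q'')
      (w : f ≫ g = 0), (ShortComplex.mk f g w).ShortExact) :
    ∃ (R Q : C) (_ : R ∈ ℛ') (_ : Q ∈ 𝒬') (f : R ⟶ Q) (g : Q ⟶ W)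
      (w : f ≫ g = 0), (ShortComplex.mk f g w).ShortExact := by
  obtain ⟨R'', Q'', hR'', hQ'', f, g, w, hS⟩ := hW
  obtain ⟨R₀, Q₀, hR₀, hQ₀, i, p, w', hT⟩ := h₁c.1 R''
  have hQ₀' : Q₀ ∈ 𝒬' := hcore ⟨hQ₀, h₁.mem_right_X₂ hT hR₀ hR''⟩
  obtain ⟨P, a, b, wa, c, wc, hWP, hPQ⟩ := exists_shortExact_pair_of_pullback hS hT
  exact ⟨R₀, P, hR₀, h₂.mem_left_X₁ hPQ h₂h hQ₀' hQ'', a, b, wa, hWP⟩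

end GillespieTrivialClass

theorem stmt_17_general (𝒬 ℛ' 𝒬' ℛ : Set C)
    (h₁ : IsCotorsionPair 𝒬 ℛ') (h₁c : IsCompleteCotorsionPair 𝒬 ℛ') (h₁h : IsHereditary 𝒬 ℛ')
    (h₂ : IsCotorsionPair 𝒬' ℛ) (h₂c : IsCompleteCotorsionPair 𝒬' ℛ) (h₂h : IsHereditary 𝒬' ℛ)
    (hcore : 𝒬 ∩ ℛ' = 𝒬' ∩ ℛ) (W : C) :
    (∃ (R Q : C) (_ : R ∈ ℛ') (_ : Q ∈ 𝒬') (f : R ⟶ Q) (g : Q ⟶ W)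
      (w : f ≫ g = 0), (ShortComplex.mk f g w).ShortExact) ↔
    (∃ (R'' Q'' : C) (_ : R'' ∈ ℛ') (_ : Q'' ∈ 𝒬') (f : W ⟶ R'') (g : R'' ⟶ Q'')
      (w : f ≫ g = 0), (ShortComplex.mk f g w).ShortExact) :=
  ⟨exists_coresolution_of_exists_resolution h₁ h₁h h₂ h₂c
      (hcore.symm.subset.trans Set.inter_subset_right),
    exists_resolution_of_exists_coresolution h₁ h₁c h₂ h₂h
      (hcore.subset.trans Set.inter_subset_left)⟩

theorem stmt_17 (𝒬 ℛ' 𝒬' ℛ : Set C)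
    (h₁ : IsCotorsionPair 𝒬 ℛ') (h₁c : IsCompleteCotorsionPair 𝒬 ℛ') (h₁h : IsHereditary 𝒬 ℛ')
    (h₂ : IsCotorsionPair 𝒬' ℛ) (h₂c : IsCompleteCotorsionPair 𝒬' ℛ) (h₂h : IsHereditary 𝒬' ℛ)
    (hQ : 𝒬' ⊆ 𝒬) (hR : ℛ' ⊆ ℛ) (hcore : 𝒬 ∩ ℛ' = 𝒬' ∩ ℛ) (W : C) :
    (∃ (R Q : C) (_ : R ∈ ℛ') (_ : Q ∈ 𝒬') (f : R ⟶ Q) (g : Q ⟶ W)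
      (w : f ≫ g = 0), (ShortComplex.mk f g w).ShortExact) ↔
    (∃ (R'' Q'' : C) (_ : R'' ∈ ℛ') (_ : Q'' ∈ 𝒬') (f : W ⟶ R'') (g : R'' ⟶ Q'')
      (w : f ≫ g = 0), (ShortComplex.mk f g w).ShortExact) :=
  stmt_17_general 𝒬 ℛ' 𝒬' ℛ h₁ h₁c h₁h h₂ h₂c h₂h hcore W
end
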